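/- Let T be a positive self-adjoint trace-class operator on a separable real Hilbert space satisfying N(T,λ) ≤ C_γλ^{−γ} for all λ ∈ (0,1], for some γ ∈ (0,1] and C_γ < ∞. Fix r ∈ (0,1/2] and σ, R > 0, and let λ_n := min(1, (σ²/(R²n))^{1/(2r+1+γ)}). Then there exists n₀ < ∞ (depending only on C_γ, r, γ and R/σ) such that for all n ≥ n₀, B_n(T,λ_n) ≤ 2, where B_n(T,λ) := 1 + (2/(nλ) + √(N(T,λ)/(nλ)))². -/

import Mathlib

open MeasureTheory ProbabilityTheory Real Filter
open scoped ENNReal NNReal BigOperators InnerProductSpace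

noncomputable section

/-- The rank-one operator `(u ⊗ u) h = ⟪h, u⟫ u`. -/
def rankOne {H : Type*} [NormedAddCommGroup H] [InnerProductSpace ℝ H] (u : H) : H →L[ℝ] H :=
  (innerSL ℝ u).smulRight u

/-- The empirical covariance operator `T_x = n⁻¹ ∑ᵢ Φ(xᵢ) ⊗ Φ(xᵢ)`. -/
def empCov {X H : Type*} [NormedAddCommGroup H] [InnerProductSpace ℝ H] {n : ℕ}
    (Φ : X → H) (x : Fin n → X) : H →L[ℝ] H :=
  (n : ℝ)⁻¹ • ∑ i, rankOne (Φ (x i))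

/-- `S*_x y = n⁻¹ ∑ᵢ yᵢ Φ(xᵢ)`. -/
def empMean {X H : Type*} [NormedAddCommGroup H] [InnerProductSpace ℝ H] {n : ℕ}
    (Φ : X → H) (x : Fin n → X) (y : Fin n → ℝ) : H :=
  (n : ℝ)⁻¹ • ∑ i, y i • Φ (x i)

/-- Effective dimension `N(T, λ) = Tr[(T+λ)⁻¹T] = ∑ᵢ μᵢ/(μᵢ+λ)` of a positive self-adjoint
trace-class operator with eigenvalues `μ` (counted with multiplicity). -/
def effDim {ι : Type*} (μ : ι → ℝ) (lam : ℝ) : ℝ := ∑' i, μ i / (μ i + lam)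

/-- `B_k(T,λ) = 1 + (2/(kλ) + √(N(T,λ)/(kλ)))²`. -/
def Bconst {ι : Type*} (μ : ι → ℝ) (k lam : ℝ) : ℝ :=
  1 + (2 / (k * lam) + Real.sqrt (effDim μ lam / (k * lam))) ^ 2

/-- The conditional probability measure `ν(· | A) = ν(A)⁻¹ ν(· ∩ A)`. -/
def condMeasure {X : Type*} [MeasurableSpace X] (ν : Measure X) (A : Set X) : Measure X :=
  (ν A)⁻¹ • ν.restrict A

/-- `P` is the orthogonal projection onto the subspace `S`. -/
def IsOrthoProjOnto {H : Type*} [NormedAddCommGroup H] [InnerProductSpace ℝ H]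
    (P : H →L[ℝ] H) (S : Submodule ℝ H) : Prop :=
  P ∘L P = P ∧ (∀ u v : H, ⟪P u, v⟫_ℝ = ⟪u, P v⟫_ℝ) ∧ LinearMap.range (P : H →ₗ[ℝ] H) = S

/-- The Nyström operator `g_{λ,l}(T_x) = (P T_x P + λ)⁻¹ P`, which coincides with
`A⁻¹ P` for `A = (P T_x P + λ)|_{ran P} : ran P → ran P`. -/
def nysOp {H : Type*} [NormedAddCommGroup H] [InnerProductSpace ℝ H]
    (lam : ℝ) (T P : H →L[ℝ] H) : H →L[ℝ] H :=
  (Ring.inverse (P ∘L T ∘L P + lam • (1 : H →L[ℝ] H))) ∘L P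

/-!
With `λ_n ≍ n^{-α}` and `α = 1/(2r+1+γ)`, both `n λ_n` and `n λ_n^{1+γ}` tend to infinity,
since `α (1+γ) < 1` exactly because `r > 0`. Once `n λ_n ≥ 4` and, via the capacity bound,
`N(T,λ_n)/(n λ_n) ≤ C_γ/(n λ_n^{1+γ}) ≤ 1/4`, both terms inside the square in `B_n(T,λ_n)` are
at most `1/2`.
-/

theorem Bconst_le_two {ι : Type*} {μ : ι → ℝ} {k lam : ℝ} (hkl : 4 ≤ k * lam)
    (hN : 4 * effDim μ lam ≤ k * lam) : Bconst μ k lam ≤ 2 := by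
  have hkl_pos : 0 < k * lam := by linarith
  have h_first : 2 / (k * lam) ≤ 1 / 2 := by
    rw [div_le_div_iff₀ hkl_pos two_pos]; linarith
  have h_second : √(effDim μ lam / (k * lam)) ≤ 1 / 2 := by
    rw [Real.sqrt_le_left (by norm_num), div_le_iff₀ hkl_pos]; linarith
  have h_sum_nonneg : 0 ≤ 2 / (k * lam) + √(effDim μ lam / (k * lam)) := by positivity
  have h_sq : (2 / (k * lam) + √(effDim μ lam / (k * lam))) ^ 2 ≤ 1 :=
    pow_le_one₀ h_sum_nonneg (by linarith)
  unfold Bconst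
  linarith

theorem Bconst_le_two_of_effDim_le_rpow {ι : Type*} {μ : ι → ℝ} {k lam γ C : ℝ}
    (hlam : 0 < lam) (hcap : effDim μ lam ≤ C * lam ^ (-γ))
    (hkl : 4 ≤ k * lam) (hklγ : 4 * C ≤ k * lam ^ (1 + γ)) : Bconst μ k lam ≤ 2 := by
  refine Bconst_le_two hkl ?_
  have hlamγ : 0 < lam ^ γ := Real.rpow_pos_of_pos hlam γ
  calc 4 * effDim μ lam ≤ 4 * C * lam ^ (-γ) := by linarith
    _ ≤ k * lam ^ (1 + γ) * lam ^ (-γ) := by gcongr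
    _ = k * lam := by
      rw [Real.rpow_add hlam, Real.rpow_one, Real.rpow_neg hlam.le]
      field_simp

theorem tendsto_mul_min_one_rpow_atTop {c α β : ℝ} (hc : 0 < c) (hα : 0 < α)
    (hαβ : α * β < 1) :
    Tendsto (fun x : ℝ => x * min 1 ((c / x) ^ α) ^ β) atTop atTop := by
  have h_pow : Tendsto (fun x : ℝ => c ^ (α * β) * x ^ (1 - α * β)) atTop atTop :=
    (tendsto_rpow_atTop (by linarith)).const_mul_atTop (Real.rpow_pos_of_pos hc _)
  refine h_pow.congr' ?_
  filter_upwards [eventually_ge_atTop c] with x hcx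
  have hx : 0 < x := hc.trans_le hcx
  have h_min : min 1 ((c / x) ^ α) = (c / x) ^ α :=
    min_eq_right (Real.rpow_le_one (by positivity) ((div_le_one hx).mpr hcx) hα.le)
  rw [h_min, ← Real.rpow_mul (by positivity), Real.div_rpow hc.le hx.le, Real.rpow_sub hx,
    Real.rpow_one]
  field_simp

theorem stmt18_general (μ : ℕ → ℝ)
    (γ Cγ r σ R : ℝ) (hγ : γ ∈ Set.Ioc (0:ℝ) 1)
    (hr : r ∈ Set.Ioc (0:ℝ) (1/2)) (hσ : 0 < σ) (hR : 0 < R)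
    (hcap : ∀ lam ∈ Set.Ioc (0:ℝ) 1, effDim μ lam ≤ Cγ * lam ^ (-γ)) :
    ∃ n₀ : ℕ, ∀ n : ℕ, n₀ ≤ n →
      Bconst μ (n : ℝ) (min 1 ((σ ^ 2 / (R ^ 2 * n)) ^ ((1:ℝ) / (2 * r + 1 + γ)))) ≤ 2 := by
  obtain ⟨hγ0, -⟩ := hγ
  obtain ⟨hr0, -⟩ := hr
  set α : ℝ := 1 / (2 * r + 1 + γ)
  have hden : 0 < 2 * r + 1 + γ := by linarith
  have hα : 0 < α := by positivity
  have hc : 0 < σ ^ 2 / R ^ 2 := by positivity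
  have h_lin := (tendsto_mul_min_one_rpow_atTop hc hα (β := 1)
    (by rw [mul_one, div_lt_one hden]; linarith)).comp tendsto_natCast_atTop_atTop
  have h_cap := (tendsto_mul_min_one_rpow_atTop hc hα (β := 1 + γ)
    (by rw [div_mul_eq_mul_div, one_mul, div_lt_one hden]; linarith)).comp
      tendsto_natCast_atTop_atTop
  obtain ⟨n₀, h⟩ := eventually_atTop.mp ((h_lin.eventually_ge_atTop 4).and
    ((h_cap.eventually_ge_atTop (4 * Cγ)).and (eventually_gt_atTop 0)))
  refine ⟨n₀, fun n hn => ?_⟩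
  obtain ⟨h4, h4C, hn0⟩ := h n hn
  simp only [Function.comp_apply, Real.rpow_one] at h4 h4C
  rw [← div_div]
  have hlam : 0 < min 1 ((σ ^ 2 / R ^ 2 / n) ^ α) :=
    lt_min one_pos (Real.rpow_pos_of_pos (by positivity) α)
  exact Bconst_le_two_of_effDim_le_rpow hlam (hcap _ ⟨hlam, min_le_left _ _⟩) h4 h4C

/-- under the capacity condition `N(T,λ) ≤ C_γ λ^{-γ}`, with
`λ_n = min(1, (σ²/(R²n))^{1/(2r+1+γ)})` one has `B_n(T,λ_n) ≤ 2` for all `n`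
sufficiently large.  The positive self-adjoint trace-class operator `T` is given
through a diagonalizing Hilbert basis `b` with summable nonnegative eigenvalues `μ`. -/
theorem stmt18 {H : Type*} [NormedAddCommGroup H] [InnerProductSpace ℝ H] [CompleteSpace H]
    (T : H →L[ℝ] H) (b : HilbertBasis ℕ ℝ H) (μ : ℕ → ℝ)
    (hμnn : ∀ i, 0 ≤ μ i) (hμsum : Summable μ)
    (hdiag : ∀ i, T (b i) = μ i • b i)
    (γ Cγ r σ R : ℝ) (hγ : γ ∈ Set.Ioc (0:ℝ) 1) (hCγ : 0 < Cγ)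
    (hr : r ∈ Set.Ioc (0:ℝ) (1/2)) (hσ : 0 < σ) (hR : 0 < R)
    (hcap : ∀ lam ∈ Set.Ioc (0:ℝ) 1, effDim μ lam ≤ Cγ * lam ^ (-γ)) :
    ∃ n₀ : ℕ, ∀ n : ℕ, n₀ ≤ n →
      Bconst μ (n : ℝ) (min 1 ((σ ^ 2 / (R ^ 2 * n)) ^ ((1:ℝ) / (2 * r + 1 + γ)))) ≤ 2 :=
  stmt18_general μ γ Cγ r σ R hγ hr hσ hR hcap
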